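/- Let E be a Banach space such that 𝒜(E) has a right approximate identity. Then the map F ↦ 𝓡(F) := {T ∈ 𝒜(E) : im T ⊆ F} is a lattice isomorphism from the lattice of closed linear subspaces of E onto the lattice of closed right ideals of 𝒜(E), with inverse I ↦ the closed linear span of ⋃_{T ∈ I} im T. -/

import Mathlib

/-! Every `x` in a closed subspace `F` is a value of a rank-one operator `φ.smulRight x ∈ 𝓡(F)`
(Hahn–Banach), so `F` is recovered from `𝓡(F)`. Conversely, let `I` be a closed right ideal and
`T ∈ 𝒜(E)` with range in the closed span `Ξ` of the ranges of `I`. Since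
`R ∘ φ.smulRight z = φ.smulRight (R z)`, the rank-one operators with range in `Ξ` lie in `I`;
writing finite-rank operators as sums of rank-one ones and passing to norm limits gives
`T ∘ S ∈ I` for all `S ∈ 𝒜(E)`, and the right approximate identity yields `T = lim T ∘ eᵢ ∈ I`.
Monotonicity of `I ↦ Ξ` turns `𝓡` into an order embedding. -/

variable {E : Type*} [NormedAddCommGroup E] [NormedSpace ℂ E] [CompleteSpace E]

/-- The algebra `𝒜(E)` of approximable operators: the norm closure of the finite-rank operators
in `B(E)`. -/
def ApproxOps (E : Type*) [NormedAddCommGroup E] [NormedSpace ℂ E] : Set (E →L[ℂ] E) :=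
  closure {T : E →L[ℂ] E | FiniteDimensional ℂ (LinearMap.range (T : E →ₗ[ℂ] E))}

/-- A closed right ideal of the Banach algebra `𝒜(E)`. -/
def IsClosedRightIdealAppr (E : Type*) [NormedAddCommGroup E] [NormedSpace ℂ E]
    (I : Set (E →L[ℂ] E)) : Prop :=
  I ⊆ ApproxOps E ∧ IsClosed I ∧ (0 : E →L[ℂ] E) ∈ I ∧
    (∀ x ∈ I, ∀ y ∈ I, x + y ∈ I) ∧ (∀ (c : ℂ), ∀ x ∈ I, c • x ∈ I) ∧
    ∀ T ∈ I, ∀ S ∈ ApproxOps E, T.comp S ∈ I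

/-- `𝓡(F) = {T ∈ 𝒜(E) : im T ⊆ F}`. -/
def RIdeal (E : Type*) [NormedAddCommGroup E] [NormedSpace ℂ E] (F : Submodule ℂ E) :
    Set (E →L[ℂ] E) :=
  {T | T ∈ ApproxOps E ∧ ∀ x : E, T x ∈ F}

/-- The inverse map: the closed linear span of `⋃_{T ∈ I} im T`. -/
def XiHat (E : Type*) [NormedAddCommGroup E] [NormedSpace ℂ E]
    (I : Set (E →L[ℂ] E)) : Submodule ℂ E :=
  (Submodule.span ℂ (⋃ T ∈ I, Set.range T)).topologicalClosure

open Filter Topology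

namespace ContinuousLinearMap

variable {𝕜 V W : Type*} [NontriviallyNormedField 𝕜]
  [NormedAddCommGroup V] [NormedSpace 𝕜 V] [NormedAddCommGroup W] [NormedSpace 𝕜 W]

theorem comp_smulRight {X : Type*} [NormedAddCommGroup X] [NormedSpace 𝕜 X]
    (T : W →L[𝕜] X) (φ : StrongDual 𝕜 V) (v : W) :
    T.comp (φ.smulRight v) = φ.smulRight (T v) := by
  ext
  simp

theorem exists_eq_sum_smulRight_of_finiteDimensional_range [CompleteSpace 𝕜] (S : V →L[𝕜] W)
    [FiniteDimensional 𝕜 (LinearMap.range (S : V →ₗ[𝕜] W))] :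
    ∃ (n : ℕ) (φ : Fin n → StrongDual 𝕜 V) (v : Fin n → W), S = ∑ k, (φ k).smulRight (v k) := by
  set R := LinearMap.range (S : V →ₗ[𝕜] W)
  let b := Module.finBasis 𝕜 R
  let Sᵣ : V →L[𝕜] R := S.codRestrict R (LinearMap.mem_range_self (S : V →ₗ[𝕜] W))
  refine ⟨_, fun k => (LinearMap.toContinuousLinearMap (b.coord k)).comp Sᵣ, fun k => b k, ?_⟩
  ext x
  have h := congrArg Subtype.val (b.sum_repr (Sᵣ x))
  simp only [Submodule.coe_sum, Submodule.coe_smul] at h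
  simpa [Sᵣ] using h.symm

end ContinuousLinearMap

section

variable {E : Type*} [NormedAddCommGroup E] [NormedSpace ℂ E]

variable (E) in
def finiteRankOps : Submodule ℂ (E →L[ℂ] E) :=
  (LinearMap.finiteRange ℂ E E).comap (ContinuousLinearMap.coeLM ℂ)

theorem mem_finiteRankOps {T : E →L[ℂ] E} :
    T ∈ finiteRankOps E ↔ FiniteDimensional ℂ (LinearMap.range (T : E →ₗ[ℂ] E)) :=
  IsNoetherian.iff_fg

theorem comp_mem_finiteRankOps {T : E →L[ℂ] E} (hT : T ∈ finiteRankOps E) (S : E →L[ℂ] E) :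
    T.comp S ∈ finiteRankOps E :=
  LinearMap.HasNoetherianRange.comp_right hT (S : E →ₗ[ℂ] E)

variable (E) in
theorem approxOps_eq_topologicalClosure :
    ApproxOps E = (finiteRankOps E).topologicalClosure := by
  rw [ApproxOps, Submodule.topologicalClosure_coe]
  congr 1
  ext T
  exact mem_finiteRankOps.symm

theorem isClosed_approxOps : IsClosed (ApproxOps E) := isClosed_closure

theorem zero_mem_approxOps : (0 : E →L[ℂ] E) ∈ ApproxOps E := by
  rw [approxOps_eq_topologicalClosure]
  exact zero_mem _

theorem add_mem_approxOps {T S : E →L[ℂ] E} (hT : T ∈ ApproxOps E) (hS : S ∈ ApproxOps E) :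
    T + S ∈ ApproxOps E := by
  rw [approxOps_eq_topologicalClosure] at *
  exact add_mem hT hS

theorem smul_mem_approxOps (c : ℂ) {T : E →L[ℂ] E} (hT : T ∈ ApproxOps E) :
    c • T ∈ ApproxOps E := by
  rw [approxOps_eq_topologicalClosure] at *
  exact Submodule.smul_mem _ c hT

theorem comp_mem_approxOps {T : E →L[ℂ] E} (hT : T ∈ ApproxOps E) (S : E →L[ℂ] E) :
    T.comp S ∈ ApproxOps E := by
  rw [approxOps_eq_topologicalClosure] at *
  exact map_mem_closure (f := fun R => R.comp S)
    ((ContinuousLinearMap.compL ℂ E E E).flip S).continuous hT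
    fun R hR => comp_mem_finiteRankOps hR S

theorem smulRight_mem_approxOps (φ : StrongDual ℂ E) (x : E) : φ.smulRight x ∈ ApproxOps E := by
  have hle : LinearMap.range (φ.smulRight x : E →ₗ[ℂ] E) ≤ ℂ ∙ x := by
    rintro - ⟨y, rfl⟩
    exact Submodule.smul_mem _ _ (Submodule.mem_span_singleton_self x)
  exact subset_closure (Submodule.finiteDimensional_of_le hle)

theorem apply_mem_xiHat {I : Set (E →L[ℂ] E)} {T : E →L[ℂ] E} (hT : T ∈ I) (x : E) :
    T x ∈ XiHat E I :=
  Submodule.le_topologicalClosure _ <| Submodule.subset_span <| Set.mem_biUnion hT ⟨x, rfl⟩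

theorem xiHat_le_iff {I : Set (E →L[ℂ] E)} {F : Submodule ℂ E} (hF : IsClosed (F : Set E)) :
    XiHat E I ≤ F ↔ ∀ T ∈ I, ∀ x, T x ∈ F :=
  ⟨fun h _ hT x => h (apply_mem_xiHat hT x), fun h =>
    Submodule.topologicalClosure_minimal _
      (Submodule.span_le.2 <| Set.iUnion₂_subset fun T hT => Set.range_subset_iff.2 (h T hT)) hF⟩

theorem xiHat_mono {I J : Set (E →L[ℂ] E)} (h : I ⊆ J) : XiHat E I ≤ XiHat E J :=
  Submodule.topologicalClosure_mono <| Submodule.span_mono <| Set.biUnion_subset_biUnion_left h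

theorem rIdeal_mono {F₁ F₂ : Submodule ℂ E} (h : F₁ ≤ F₂) : RIdeal E F₁ ⊆ RIdeal E F₂ :=
  fun _ hT => ⟨hT.1, fun x => h (hT.2 x)⟩

theorem isClosedRightIdealAppr_rIdeal {F : Submodule ℂ E} (hF : IsClosed (F : Set E)) :
    IsClosedRightIdealAppr E (RIdeal E F) := by
  refine ⟨fun T hT => hT.1, ?_, ⟨zero_mem_approxOps, fun _ => F.zero_mem⟩,
    fun T hT S hS => ⟨add_mem_approxOps hT.1 hS.1, fun x => F.add_mem (hT.2 x) (hS.2 x)⟩,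
    fun c T hT => ⟨smul_mem_approxOps c hT.1, fun x => F.smul_mem c (hT.2 x)⟩,
    fun T hT S _ => ⟨comp_mem_approxOps hT.1 S, fun x => hT.2 (S x)⟩⟩
  simp only [RIdeal, Set.ofPred_and, Set.ofPred_forall]
  exact isClosed_approxOps.inter <|
    isClosed_iInter fun x => hF.preimage (ContinuousLinearMap.apply ℂ E x).continuous

theorem le_xiHat_rIdeal (F : Submodule ℂ E) : F ≤ XiHat E (RIdeal E F) := by
  intro x hx
  obtain rfl | hx0 := eq_or_ne x 0
  · exact zero_mem _
  obtain ⟨φ, hφ⟩ := SeparatingDual.exists_eq_one (R := ℂ) hx0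
  have hT : φ.smulRight x ∈ RIdeal E F :=
    ⟨smulRight_mem_approxOps φ x, fun y => F.smul_mem _ hx⟩
  simpa [hφ] using apply_mem_xiHat hT x

theorem xiHat_rIdeal {F : Submodule ℂ E} (hF : IsClosed (F : Set E)) :
    XiHat E (RIdeal E F) = F :=
  le_antisymm ((xiHat_le_iff hF).2 fun _ hT => hT.2) (le_xiHat_rIdeal F)

namespace IsClosedRightIdealAppr

variable {I : Set (E →L[ℂ] E)}

def toSubmodule (hI : IsClosedRightIdealAppr E I) : Submodule ℂ (E →L[ℂ] E) where
  carrier := I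
  zero_mem' := hI.2.2.1
  add_mem' ha hb := hI.2.2.2.1 _ ha _ hb
  smul_mem' := hI.2.2.2.2.1

theorem smulRight_mem (hI : IsClosedRightIdealAppr E I) (φ : StrongDual ℂ E) {x : E}
    (hx : x ∈ XiHat E I) : φ.smulRight x ∈ I := by
  let q := hI.toSubmodule.comap (ContinuousLinearMap.smulRightL ℂ E E φ : E →ₗ[ℂ] E →L[ℂ] E)
  have hq : IsClosed (q : Set E) := by
    show IsClosed (ContinuousLinearMap.smulRightL ℂ E E φ ⁻¹' I)
    exact hI.2.1.preimage (ContinuousLinearMap.smulRightL ℂ E E φ).continuous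
  suffices XiHat E I ≤ q from this hx
  refine (xiHat_le_iff hq).2 fun R hR z => ?_
  show φ.smulRight (R z) ∈ I
  rw [← R.comp_smulRight]
  exact hI.2.2.2.2.2 R hR _ (smulRight_mem_approxOps φ z)

theorem comp_mem_of_finiteDimensional_range (hI : IsClosedRightIdealAppr E I) {T S : E →L[ℂ] E}
    (hT : ∀ x, T x ∈ XiHat E I) [FiniteDimensional ℂ (LinearMap.range (S : E →ₗ[ℂ] E))] :
    T.comp S ∈ I := by
  obtain ⟨n, φ, v, rfl⟩ := S.exists_eq_sum_smulRight_of_finiteDimensional_range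
  rw [ContinuousLinearMap.comp_finsetSum]
  exact hI.toSubmodule.sum_mem fun k _ => by
    rw [T.comp_smulRight]
    exact hI.smulRight_mem (φ k) (hT (v k))

theorem comp_mem (hI : IsClosedRightIdealAppr E I) {T S : E →L[ℂ] E}
    (hT : ∀ x, T x ∈ XiHat E I) (hS : S ∈ ApproxOps E) : T.comp S ∈ I := by
  rw [← hI.2.1.closure_eq]
  exact map_mem_closure (ContinuousLinearMap.compL ℂ E E E T).continuous hS
    fun R (hR : FiniteDimensional ℂ _) => hI.comp_mem_of_finiteDimensional_range hT

theorem mem_of_tendsto_comp (hI : IsClosedRightIdealAppr E I) {ι : Type*} {l : Filter ι}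
    [l.NeBot] {e : ι → E →L[ℂ] E} (he : ∀ i, e i ∈ ApproxOps E) {T : E →L[ℂ] E}
    (hT : ∀ x, T x ∈ XiHat E I) (hlim : Tendsto (fun i => T.comp (e i)) l (𝓝 T)) : T ∈ I :=
  hI.2.1.mem_of_tendsto hlim (Eventually.of_forall fun i => hI.comp_mem hT (he i))

end IsClosedRightIdealAppr

theorem rIdeal_xiHat {ι : Type*} {l : Filter ι} [l.NeBot] {e : ι → E →L[ℂ] E}
    (he : ∀ i, e i ∈ ApproxOps E)
    (hconv : ∀ T ∈ ApproxOps E, Tendsto (fun i => T.comp (e i)) l (𝓝 T))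
    {I : Set (E →L[ℂ] E)} (hI : IsClosedRightIdealAppr E I) : RIdeal E (XiHat E I) = I :=
  Set.Subset.antisymm (fun T hT => hI.mem_of_tendsto_comp he hT.2 (hconv T hT.1))
    fun _ hT => ⟨hI.1 hT, apply_mem_xiHat hT⟩

end

/-- Let `E` be a Banach space such that `𝒜(E)` has a right approximate
identity. Then `F ↦ 𝓡(F)` is a lattice isomorphism from the closed linear subspaces of `E` onto
the closed right ideals of `𝒜(E)`, with inverse `I ↦ closed span of ⋃_{T ∈ I} im T`. -/
theorem rIdeal_lattice_iso
    (rai : ∃ (ι : Type) (l : Filter ι) (e : ι → (E →L[ℂ] E)), l.NeBot ∧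
      (∀ i, e i ∈ ApproxOps E) ∧
      ∀ a ∈ ApproxOps E, Filter.Tendsto (fun i => a.comp (e i)) l (nhds a)) :
    (∀ F : Submodule ℂ E, IsClosed (F : Set E) → IsClosedRightIdealAppr E (RIdeal E F)) ∧
    (∀ F : Submodule ℂ E, IsClosed (F : Set E) → XiHat E (RIdeal E F) = F) ∧
    (∀ I : Set (E →L[ℂ] E), IsClosedRightIdealAppr E I → RIdeal E (XiHat E I) = I) ∧
    (∀ F₁ F₂ : Submodule ℂ E, IsClosed (F₁ : Set E) → IsClosed (F₂ : Set E) →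
      (F₁ ≤ F₂ ↔ RIdeal E F₁ ⊆ RIdeal E F₂)) := by
  obtain ⟨ι, l, e, hl, he, hconv⟩ := rai
  refine ⟨fun F hF => isClosedRightIdealAppr_rIdeal hF, fun F hF => xiHat_rIdeal hF,
    fun I hI => rIdeal_xiHat he hconv hI, fun F₁ F₂ hF₁ hF₂ => ⟨rIdeal_mono, fun h => ?_⟩⟩
  calc F₁ = XiHat E (RIdeal E F₁) := (xiHat_rIdeal hF₁).symm
    _ ≤ XiHat E (RIdeal E F₂) := xiHat_mono h
    _ = F₂ := xiHat_rIdeal hF₂
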